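/- Let n ≥ 3 be a natural number and 2 ≤ p ≤ n real. Set p' = p/(p-1), κ = n^{-1/(p-1)}(p-1), β = n/p', t₀ = κ/(β+1), g(t) = (2/e)(e^{-2t}(t+1)+t-1)/t, and I = (κ/p') e^{-κ} ∫₀¹ t^{β} e^{κ t} dt. Then I > (1/p') · (t₀/(t₀+1)) · (1 + g(t₀)/κ). -/

import Mathlib

/-!
Writing `t ^ β * exp (κ t) = t ^ (β + κ) * exp κ * exp (κ (t - 1 - log t))` and using
`exp y ≥ 1 + y` gives a minorant of the integrand whose integral is explicit:
`exp κ * (1 / m + κ / (m ^ 2 * (m + 1)))` with `m = β + κ + 1`. Comparing with the claimed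
bound reduces everything to `g t₀ * m * (m + 1) < κ ^ 2`, a one-variable inequality for
`t₀ ∈ (0, 1]` once `β + 1 ≥ 5 / 2`; it follows from a degree-5 Taylor bound for `exp (2 t)`
and `e > 2.7`.
-/

noncomputable def g (t : ℝ) : ℝ :=
  (2 / Real.exp 1) * (Real.exp (-2 * t) * (t + 1) + t - 1) / t

open Real Set intervalIntegral
open MeasureTheory (volume)

lemma continuousOn_log_mul_rpow {r : ℝ} (hr : 0 < r) :
    ContinuousOn (fun t : ℝ => log t * t ^ r) (Ici 0) := by
  intro x hx
  rcases (mem_Ici.1 hx).eq_or_lt with rfl | hx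
  · rw [← continuousWithinAt_Ioi_iff_Ici]
    simpa [ContinuousWithinAt] using tendsto_log_mul_rpow_nhdsGT_zero hr
  · exact ((continuousAt_log hx.ne').mul
      (continuousAt_rpow_const x r (Or.inl hx.ne'))).continuousWithinAt

lemma intervalIntegrable_rpow_mul_log {c : ℝ} (hc : 0 < c) :
    IntervalIntegrable (fun t : ℝ => t ^ c * log t) volume 0 1 := by
  refine ContinuousOn.intervalIntegrable ?_
  simpa only [mul_comm, uIcc_of_le zero_le_one] using
    (continuousOn_log_mul_rpow hc).mono Icc_subset_Ici_self

lemma integral_rpow_mul_log {c : ℝ} (hc : 0 < c) :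
    ∫ t in (0:ℝ)..1, t ^ c * log t = -1 / (c + 1) ^ 2 := by
  have hc1 : c + 1 ≠ 0 := by positivity
  have hcont : ContinuousOn
      (fun t : ℝ => log t * t ^ (c + 1) / (c + 1) - t ^ (c + 1) / (c + 1) ^ 2) (Icc 0 1) :=
    ((continuousOn_log_mul_rpow (by positivity)).mono Icc_subset_Ici_self).div_const _ |>.sub
      ((continuous_rpow_const (by positivity)).continuousOn.div_const _)
  rw [integral_eq_sub_of_hasDerivAt_of_le zero_le_one hcont ?_
    (intervalIntegrable_rpow_mul_log hc)]
  · simp [zero_rpow hc1]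
    field_simp
  · intro x hx
    have hx0 : x ≠ 0 := hx.1.ne'
    have hpow := hasDerivAt_rpow_const (p := c + 1) (x := x) (Or.inl hx0)
    refine (((hasDerivAt_log hx0).mul hpow).div_const (c + 1) |>.sub
      (hpow.div_const ((c + 1) ^ 2))).congr_deriv ?_
    rw [add_sub_cancel_right, rpow_add_one hx0]
    field_simp
    ring

lemma rpow_add_mul_exp_mul_one_add_le {x : ℝ} (hx : 0 < x) (β κ : ℝ) :
    x ^ (β + κ) * exp κ * (1 + κ * (x - 1 - log x)) ≤ x ^ β * exp (κ * x) := by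
  have hsplit : x ^ β * exp (κ * x) = x ^ (β + κ) * exp κ * exp (κ * (x - 1 - log x)) := by
    rw [rpow_add hx, rpow_def_of_pos hx κ, mul_assoc, mul_assoc, ← exp_add, ← exp_add]
    ring_nf
  rw [hsplit]
  gcongr
  linarith [add_one_le_exp (κ * (x - 1 - log x))]

theorem exp_mul_le_integral_rpow_mul_exp {β κ : ℝ} (hβ : -1 < β) (hβκ : 0 < β + κ) :
    exp κ * (1 / (β + κ + 1) + κ / ((β + κ + 1) ^ 2 * (β + κ + 2)))
      ≤ ∫ t in (0:ℝ)..1, t ^ β * exp (κ * t) := by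
  set a := β + κ
  have hpow : IntervalIntegrable (fun t : ℝ => t ^ a) volume 0 1 :=
    intervalIntegrable_rpow' (by linarith)
  have hpow' : IntervalIntegrable (fun t : ℝ => t ^ (a + 1)) volume 0 1 :=
    intervalIntegrable_rpow' (by linarith)
  have hlog := intervalIntegrable_rpow_mul_log hβκ
  have hint : ∀ r : ℝ, -1 < r → ∫ t in (0:ℝ)..1, t ^ r = 1 / (r + 1) := fun r hr => by
    rw [integral_rpow (Or.inl hr), one_rpow, zero_rpow (by linarith)]
    ring
  calc exp κ * (1 / (a + 1) + κ / ((a + 1) ^ 2 * (a + 2)))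
      = ∫ t in (0:ℝ)..1,
          exp κ * ((1 - κ) * t ^ a + κ * t ^ (a + 1) - κ * (t ^ a * log t)) := by
        rw [integral_const_mul,
          integral_sub ((hpow.const_mul _).add (hpow'.const_mul _)) (hlog.const_mul _),
          integral_add (hpow.const_mul _) (hpow'.const_mul _), integral_const_mul,
          integral_const_mul, integral_const_mul, hint a (by linarith), hint (a + 1) (by linarith),
          integral_rpow_mul_log hβκ]
        field_simp
        ring
    _ ≤ ∫ t in (0:ℝ)..1, t ^ β * exp (κ * t) := by
        refine integral_mono_on_of_le_Ioo zero_le_one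
          ((((hpow.const_mul _).add (hpow'.const_mul _)).sub (hlog.const_mul _)).const_mul _)
          ((intervalIntegrable_rpow' hβ).mul_continuousOn (by fun_prop)) fun x hx => ?_
        convert rpow_add_mul_exp_mul_one_add_le hx.1 β κ using 1
        rw [rpow_add_one hx.1.ne']
        ring

lemma g_lt_of_le_one {t : ℝ} (ht0 : 0 < t) (ht1 : t ≤ 1) :
    g t < 5 * t ^ 2 / ((1 + t) * (5 * t + 7)) := by
  set P := 1 + 2 * t + 2 * t ^ 2 + 4 / 3 * t ^ 3 + 2 / 3 * t ^ 4 + 4 / 15 * t ^ 5 with hP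
  have hP_le : P ≤ exp (2 * t) := by
    have := sum_le_exp_of_nonneg (by positivity : 0 ≤ 2 * t) 6
    norm_num [Finset.sum_range_succ, Nat.factorial] at this
    linarith
  have hX : (exp (-2 * t) * (t + 1) + t - 1) * P ≤ (t + 1) + (t - 1) * P := by
    have : exp (-2 * t) * P ≤ 1 := by
      calc exp (-2 * t) * P ≤ exp (-2 * t) * exp (2 * t) := by gcongr
        _ = 1 := by rw [← exp_add]; simp
    nlinarith
  -- `(t + 1) + (t - 1) * exp (2 * t)` vanishes to third order at `0`, and so does its Taylor
  -- truncation; the remaining cofactor is a quintic that is positive on `[0, 1]`.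
  have hpoly :
      2 * ((t + 1) + (t - 1) * P) * ((1 + t) * (5 * t + 7)) < 5 * (27 / 10) * t ^ 3 * P := by
    have hq : 0 < 25/6 + 5/3 * t - 19/15 * t^2 - 2 * t^3 - 7/5 * t^4 + 14/15 * t^5 := by
      nlinarith [pow_le_one₀ ht0.le ht1 (n := 2), pow_le_one₀ ht0.le ht1 (n := 3),
        pow_le_one₀ ht0.le ht1 (n := 4)]
    have := mul_pos (pow_pos ht0 3) hq
    linear_combination this
  have he : 27 / 10 < exp 1 := by have := exp_one_gt_d9; norm_num at this; linarith
  have hPpos : 0 < P := by positivity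
  rw [g, div_mul_eq_mul_div, div_div, div_lt_div_iff₀ (by positivity) (by positivity)]
  nlinarith [mul_lt_mul_of_pos_right he (by positivity : 0 < 5 * t ^ 3 * P)]

lemma g_div_lt {κ b : ℝ} (hκ : 0 < κ) (hκb : κ ≤ b) (hb : 5 / 2 ≤ b) :
    g (κ / b) < κ ^ 2 / ((b + κ) * (b + κ + 1)) := by
  have hb0 : 0 < b := by linarith
  calc g (κ / b) < 5 * (κ / b) ^ 2 / ((1 + κ / b) * (5 * (κ / b) + 7)) :=
        g_lt_of_le_one (by positivity) ((div_le_one hb0).2 hκb)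
    _ = 5 * κ ^ 2 / ((b + κ) * (5 * κ + 7 * b)) := by field_simp
    _ ≤ κ ^ 2 / ((b + κ) * (b + κ + 1)) := by
        rw [div_le_div_iff₀ (by positivity) (by positivity)]
        have : 0 ≤ κ ^ 2 * (b + κ) * (2 * b - 5) := by
          have : 0 ≤ 2 * b - 5 := by linarith
          positivity
        linear_combination this

theorem div_add_one_mul_one_add_g_div_lt_integral {β κ : ℝ} (hβ : 3 / 2 ≤ β) (hκ : 0 < κ)
    (hκβ : κ ≤ β + 1) :
    κ / (β + 1) / (κ / (β + 1) + 1) * (1 + g (κ / (β + 1)) / κ)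
      < κ * exp (-κ) * ∫ t in (0:ℝ)..1, t ^ β * exp (κ * t) := by
  obtain ⟨m, hm⟩ : ∃ m, m = β + κ + 1 := ⟨_, rfl⟩
  have hm0 : 0 < m := by linarith
  have hg : g (κ / (β + 1)) < κ ^ 2 / (m * (m + 1)) := by
    convert g_div_lt hκ (b := β + 1) hκβ (by linarith) using 3 <;> rw [hm] <;> ring
  have hfrac : κ / (β + 1) / (κ / (β + 1) + 1) = κ / m := by
    rw [hm, div_add_one (by linarith), div_div_div_cancel_right₀ (by linarith)]
    ring_nf
  have hintegral :=
    exp_mul_le_integral_rpow_mul_exp (by linarith : -1 < β) (by linarith : 0 < β + κ)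
  rw [← hm, show β + κ + 2 = m + 1 by linarith] at hintegral
  calc κ / (β + 1) / (κ / (β + 1) + 1) * (1 + g (κ / (β + 1)) / κ)
      = κ * (1 / m + g (κ / (β + 1)) / (κ * m)) := by rw [hfrac]; field_simp
    _ < κ * (1 / m + (κ ^ 2 / (m * (m + 1))) / (κ * m)) := by gcongr
    _ = κ * exp (-κ) * (exp κ * (1 / m + κ / (m ^ 2 * (m + 1)))) := by
        rw [mul_assoc κ, ← mul_assoc (exp (-κ)), ← exp_add, neg_add_cancel, exp_zero, one_mul]
        field_simp
    _ ≤ κ * exp (-κ) * ∫ t in (0:ℝ)..1, t ^ β * exp (κ * t) := by gcongr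

theorem stmt_15 (n : ℕ) (hn : 3 ≤ n) (p p' κ β t₀ I : ℝ)
    (hp2 : 2 ≤ p) (hpn : p ≤ n)
    (hp' : p' = p / (p - 1))
    (hκ : κ = (n : ℝ) ^ (-(1 / (p - 1))) * (p - 1))
    (hβ : β = n / p')
    (ht₀ : t₀ = κ / (β + 1))
    (hI : I = (κ / p') * Real.exp (-κ) * ∫ t in (0:ℝ)..1, t ^ β * Real.exp (κ * t)) :
    I > (1 / p') * (t₀ / (t₀ + 1)) * (1 + g t₀ / κ) := by
  have hn3 : (3 : ℝ) ≤ n := by exact_mod_cast hn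
  have hp'0 : 0 < p' := by rw [hp']; exact div_pos (by linarith) (by linarith)
  have hβ_eq : β = n * (p - 1) / p := by rw [hβ, hp']; field_simp
  have hβ32 : 3 / 2 ≤ β := by rw [hβ_eq, le_div_iff₀ (by linarith)]; nlinarith
  have hpβ : p - 1 ≤ β := by rw [hβ_eq, le_div_iff₀ (by linarith)]; nlinarith
  have hκ0 : 0 < κ := by rw [hκ]; exact mul_pos (by positivity) (by linarith)
  have hκp : κ < p - 1 := by
    have : (n : ℝ) ^ (-(1 / (p - 1))) < 1 :=
      rpow_lt_one_of_one_lt_of_neg (by linarith) (neg_lt_zero.2 (one_div_pos.2 (by linarith)))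
    rw [hκ]; nlinarith
  calc 1 / p' * (t₀ / (t₀ + 1)) * (1 + g t₀ / κ)
      = 1 / p' * (t₀ / (t₀ + 1) * (1 + g t₀ / κ)) := mul_assoc _ _ _
    _ < 1 / p' * (κ * exp (-κ) * ∫ t in (0:ℝ)..1, t ^ β * exp (κ * t)) := by
        rw [ht₀]
        exact mul_lt_mul_of_pos_left
          (div_add_one_mul_one_add_g_div_lt_integral hβ32 hκ0 (by linarith)) (by positivity)
    _ = I := by rw [hI]; ring
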